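/- Let K ≥ 1, let α : {1,…,K} → ℝ be nonincreasing, and let R be a ranked list over [K]. Then for every position k ∈ {1,…,K}, α(k) − α(R(k)) ≤ Δ(R), where Δ(R) is the attraction gap of R. -/

import Mathlib

/-- The attraction gap of a ranked list `R` over `[K]` with attraction
probabilities `α`: `Δ(R) = Σ_{k=1}^{K-1} max(0, α(R(k+1)) − α(R(k)))`. -/
noncomputable def attractionGap (K : ℕ) (α : ℕ → ℝ) (R : ℕ → ℕ) : ℝ :=
  ∑ k ∈ Finset.Icc 1 (K - 1), max 0 (α (R (k + 1)) - α (R k))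

/-!
Some position `j ≥ k` must hold an item `≤ k` (the
`K - k + 1` positions `k, …, K` cannot all hold one of the `K - k` items `k + 1, …, K`).
Then `α k ≤ α (R j)`, and the increase `α (R j) - α (R k)` along the list is bounded by the sum
of the positive parts of the increments between positions `k` and `j`, hence by `Δ(R)`.
-/

open Finset

theorem exists_mem_Icc_apply_le_of_injOn {R : ℕ → ℕ} {k K : ℕ} (hkK : k ≤ K)
    (hmaps : Set.MapsTo R (Set.Icc k K) (Set.Iic K)) (hinj : Set.InjOn R (Set.Icc k K)) :
    ∃ j ∈ Set.Icc k K, R j ≤ k := by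
  by_contra! hbig
  have hmaps' : Set.MapsTo R (Icc k K : Finset ℕ) (Ioc k K : Finset ℕ) := fun j hj => by
    simpa using ⟨hbig j (by simpa using hj), hmaps (by simpa using hj)⟩
  have hcard := card_le_card_of_injOn R hmaps' (by simpa using hinj)
  simp only [Nat.card_Icc, Nat.card_Ioc] at hcard
  omega

theorem sub_le_sum_Ico_max_zero_sub {M : Type*} [AddCommGroup M] [LinearOrder M]
    [IsOrderedAddMonoid M] (f : ℕ → M) {m n : ℕ} (hmn : m ≤ n) :
    f n - f m ≤ ∑ i ∈ Ico m n, max 0 (f (i + 1) - f i) := by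
  rw [← sum_Ico_sub f hmn]
  exact sum_le_sum fun i _ => le_max_right _ _

theorem sub_le_attractionGap {K : ℕ} (α : ℕ → ℝ) (R : ℕ → ℕ) {k j : ℕ}
    (hk : 1 ≤ k) (hkj : k ≤ j) (hjK : j ≤ K) :
    α (R j) - α (R k) ≤ attractionGap K α R := by
  calc α (R j) - α (R k) ≤ ∑ i ∈ Ico k j, max 0 (α (R (i + 1)) - α (R i)) :=
        sub_le_sum_Ico_max_zero_sub (α ∘ R) hkj
    _ ≤ attractionGap K α R := by
        refine sum_le_sum_of_subset_of_nonneg (fun i hi => ?_) fun _ _ _ => le_max_left _ _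
        simp only [mem_Ico, mem_Icc] at hi ⊢
        omega

theorem bubblerank_position_gap_general
    (K : ℕ)
    (α : ℕ → ℝ) (hαanti : AntitoneOn α (Set.Icc 1 K))
    (R : ℕ → ℕ) (hR : Set.BijOn R (Set.Icc 1 K) (Set.Icc 1 K)) :
    ∀ k ∈ Set.Icc 1 K, α k - α (R k) ≤ attractionGap K α R := by
  intro k hk
  have hsub : Set.Icc k K ⊆ Set.Icc 1 K := Set.Icc_subset_Icc_left hk.1
  obtain ⟨j, hj, hRj⟩ := exists_mem_Icc_apply_le_of_injOn hk.2
    (fun j hj => (hR.mapsTo (hsub hj)).2) (hR.injOn.mono hsub)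
  have hαk : α k ≤ α (R j) := hαanti (hR.mapsTo (hsub hj)) hk hRj
  have hgap := sub_le_attractionGap α R hk.1 hj.1 hj.2
  linarith

/-- For nonincreasing `α : [K] → ℝ` and a ranked list `R`
over `[K]` (a bijection of `{1,…,K}`), every position `k` satisfies
`α(k) − α(R(k)) ≤ Δ(R)`. -/
theorem bubblerank_position_gap
    (K : ℕ) (hK : 1 ≤ K)
    (α : ℕ → ℝ) (hαanti : AntitoneOn α (Set.Icc 1 K))
    (R : ℕ → ℕ) (hR : Set.BijOn R (Set.Icc 1 K) (Set.Icc 1 K)) :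
    ∀ k ∈ Set.Icc 1 K, α k - α (R k) ≤ attractionGap K α R :=
  bubblerank_position_gap_general K α hαanti R hR
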